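/- For every natural number n, the coefficient of α^n in the formal power series Q_y(α)^{n+1} ∈ (ℚ[y])[[α]] equals 1 + (−y) + (−y)^2 + ⋯ + (−y)^n = Σ_{i=0}^{n} (−y)^i in ℚ[y]. (This is Hirzebruch's computation of the χ_y-genus of complex projective n-space, χ_y(P^n) = ∫_{P^n} T_y^*(TP^n)∩[P^n], since the total Chern class of TP^n is (1+h)^{n+1}.) -/

import Mathlib

/-!
Put `c = 1 + y` and `u(α) = (1 - e^{-cα})/c = α v(α)`. Then `f(cα) = 1/v`, so
`Q_y = (1 - y u)/v`, and `u' = 1 - c u`, so `(1 - y u) - u = u'`. The coefficient of `αⁿ` in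
`Q_y^{n+1}` is the residue of `(1 - y u)^{n+1} dα / u^{n+1}`, and the substitution `t = u` shows
that the residue of `P(u) u' dα / u^{n+1}` is `[tⁿ] P` for every polynomial `P` (below, with
`w = 1/v`, this residue is the coefficient `[αⁿ] P(u) u' w^{n+1}`). By the geometric
sum, `(1 - y u)^{n+1} = u^{n+1} + u' ∑ᵢ (1 - y u)^i u^{n-i}`, whose residue is
`∑ᵢ [tⁱ] (1 - y t)^i = ∑ᵢ (-y)^i`.
-/

open PowerSeries

/-- `e^{-x} ∈ ℚ[[x]]`. -/
noncomputable def expNeg : PowerSeries ℚ := rescale (-1 : ℚ) (PowerSeries.exp ℚ)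

/-- The normalized Hirzebruch power series `Q_y(α) = f(α(1+y)) − αy ∈ (ℚ[y])[[α]]`,
where `f(α(1+y))` is the substitution of `α(1+y)` into `f`, realized by rescaling by
`1+y`. -/
noncomputable def Qy (f : PowerSeries ℚ) : PowerSeries (Polynomial ℚ) :=
  rescale (1 + Polynomial.X) (PowerSeries.map (algebraMap ℚ (Polynomial ℚ)) f) -
    PowerSeries.C Polynomial.X * PowerSeries.X

open Finset

namespace PowerSeries

theorem derivative_rescale {R : Type*} [CommSemiring R] (a : R) (f : R⟦X⟧) :
    d⁄dX R (rescale a f) = C a * rescale a (d⁄dX R f) := by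
  ext n
  simp only [coeff_derivative, coeff_rescale, coeff_C_mul, pow_succ]
  ring

variable {R : Type*} [CommRing R] [IsAddTorsionFree R] {v w : R⟦X⟧}

theorem coeff_derivative_X_mul_mul_pow (hvw : v * w = 1) (m : ℕ) :
    coeff m (d⁄dX R (X * v) * w ^ (m + 1)) = if m = 0 then 1 else 0 := by
  have hsplit : d⁄dX R (X * v) * w ^ (m + 1) = w ^ m + X * (d⁄dX R v * w ^ (m + 1)) := by
    rw [Derivation.leibniz, derivative_X, smul_eq_mul, smul_eq_mul, pow_succ]
    linear_combination w ^ m * hvw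
  rw [hsplit, map_add]
  rcases m with _ | k
  · simp
  -- `X v' w^{k+2} = -X (w^{k+1})' / (k+1)`, and `X g'` has `X^{k+1}`-coefficient `(k+1) [X^{k+1}] g`.
  have hw : d⁄dX R (w ^ (k + 1)) = -((k + 1 : ℕ) : R⟦X⟧) * (d⁄dX R v * w ^ (k + 2)) := by
    rw [derivative_pow, (d⁄dX R).leibniz_of_mul_eq_one ((mul_comm w v).trans hvw), smul_eq_mul]
    simp only [add_tsub_cancel_right]
    ring
  have hcoeff := congrArg (coeff k) hw
  rw [coeff_derivative, ← map_natCast (C (R := R)), neg_mul, map_neg, coeff_C_mul] at hcoeff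
  rw [coeff_succ_X_mul, if_neg k.succ_ne_zero]
  refine nsmul_right_injective (M := R) k.succ_ne_zero ?_
  simp only [smul_add, nsmul_eq_mul, smul_zero]
  push_cast at hcoeff ⊢
  linear_combination hcoeff

theorem coeff_pow_mul_derivative_X_mul_mul_pow (hvw : v * w = 1) (k n : ℕ) :
    coeff n ((X * v) ^ k * d⁄dX R (X * v) * w ^ (n + 1)) = if k = n then 1 else 0 := by
  have hshift : (X * v) ^ k * d⁄dX R (X * v) * w ^ (n + 1) =
      X ^ k * (v ^ k * d⁄dX R (X * v) * w ^ (n + 1)) := by ring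
  rw [hshift, coeff_X_pow_mul']
  by_cases hkn : k ≤ n
  · obtain ⟨m, rfl⟩ := Nat.exists_eq_add_of_le hkn
    have hcancel : v ^ k * d⁄dX R (X * v) * w ^ (k + m + 1) =
        (v * w) ^ k * (d⁄dX R (X * v) * w ^ (m + 1)) := by ring
    rw [if_pos hkn, hcancel, hvw, one_pow, one_mul, Nat.add_sub_cancel_left,
      coeff_derivative_X_mul_mul_pow hvw]
    simp
  · rw [if_neg hkn, if_neg (by omega)]

theorem coeff_aeval_X_mul_mul_derivative_mul_pow (hvw : v * w = 1) (p : Polynomial R) (n : ℕ) :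
    coeff n (Polynomial.aeval (X * v) p * d⁄dX R (X * v) * w ^ (n + 1)) = p.coeff n := by
  induction p using Polynomial.induction_on' with
  | add p q hp hq => simp only [map_add, add_mul, hp, hq, Polynomial.coeff_add]
  | monomial k a =>
    rw [Polynomial.aeval_monomial, Polynomial.coeff_monomial, algebraMap_eq, mul_assoc, mul_assoc,
      coeff_C_mul, ← mul_assoc, coeff_pow_mul_derivative_X_mul_mul_pow hvw,
      mul_ite, mul_one, mul_zero]

theorem coeff_one_sub_C_mul_X_mul_pow_mul_pow (hvw : v * w = 1) {y : R}
    (hv : d⁄dX R (X * v) = 1 - C (1 + y) * (X * v)) (n : ℕ) :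
    coeff n ((1 - C y * (X * v)) ^ (n + 1) * w ^ (n + 1)) = ∑ i ∈ range (n + 1), (-y) ^ i := by
  set u := X * v with hu
  clear_value u
  set P : Polynomial R := ∑ i ∈ range (n + 1), (1 - Polynomial.C y * Polynomial.X) ^ i *
    Polynomial.X ^ (n - i)
  have hgeom : (1 - C y * u) ^ (n + 1) = u ^ (n + 1) + Polynomial.aeval u P * d⁄dX R u := by
    have := geom_sum₂_mul (1 - C y * u) u (n + 1)
    rw [Nat.add_sub_cancel] at this
    simp only [P, map_sum, map_mul, map_pow, map_sub, map_one, Polynomial.aeval_X,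
      Polynomial.aeval_C, algebraMap_eq, hv, map_add]
    linear_combination -this
  have hP : P.coeff n = ∑ i ∈ range (n + 1), (-y) ^ i := by
    simp only [P, Polynomial.finsetSum_coeff]
    refine sum_congr rfl fun i hi => ?_
    have hin : i ≤ n := Nat.lt_succ_iff.mp (mem_range.mp hi)
    have hpow := Polynomial.coeff_pow_of_natDegree_le (p := 1 - Polynomial.C y * Polynomial.X)
      (n := 1) (m := i) (by compute_degree!)
    rw [mul_one] at hpow
    rw [Polynomial.coeff_mul_X_pow', if_pos (Nat.sub_le n i), Nat.sub_sub_self hin, hpow]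
    simp [Polynomial.coeff_one]
  have hlead : coeff n (u ^ (n + 1) * w ^ (n + 1)) = 0 := by
    rw [hu, mul_pow, mul_assoc, ← mul_pow, hvw, one_pow, mul_one, coeff_X_pow, if_neg (by omega)]
  rw [hgeom, add_mul, map_add, hlead, zero_add, ← hP, hu]
  exact coeff_aeval_X_mul_mul_derivative_mul_pow hvw P n

end PowerSeries

theorem map_expNeg {R : Type*} [CommRing R] [Algebra ℚ R] :
    map (algebraMap ℚ R) expNeg = rescale (-1) (exp R) := by
  rw [expNeg, ← rescale_map, map_exp, map_neg, map_one]

theorem derivative_X_mul_rescale_of_one_sub_expNeg_eq {R : Type*} [CommRing R] [IsDomain R]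
    [Algebra ℚ R] {g : ℚ⟦X⟧} (hg : 1 - expNeg = X * g) {c : R} (hc : c ≠ 0) :
    d⁄dX R (X * rescale c (map (algebraMap ℚ R) g)) =
      1 - C c * (X * rescale c (map (algebraMap ℚ R) g)) := by
  set u := X * rescale c (map (algebraMap ℚ R) g)
  have hexp : rescale (-c) (exp R) = 1 - C c * u := by
    have := congrArg (fun h => rescale c (map (algebraMap ℚ R) h)) hg
    simp only [map_sub, map_one, map_mul, map_X, rescale_X, map_expNeg, rescale_rescale,
      neg_one_mul] at this
    linear_combination -this
  apply mul_left_cancel₀ ((map_ne_zero_iff _ C_injective).mpr hc)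
  calc C c * d⁄dX R u = d⁄dX R (1 - rescale (-c) (exp R)) := by
        rw [hexp, sub_sub_cancel, ← smul_eq_C_mul, ← smul_eq_C_mul, Derivation.map_smul]
    _ = C c * (1 - C c * u) := by
      rw [map_sub, derivative_one, derivative_rescale, derivative_exp, hexp, map_neg]
      ring

theorem stmt_2 (f : PowerSeries ℚ) (hf : f * (1 - expNeg) = PowerSeries.X) (n : ℕ) :
    PowerSeries.coeff (R := Polynomial ℚ) n (Qy f ^ (n + 1)) =
      ∑ i ∈ Finset.range (n + 1), (-Polynomial.X : Polynomial ℚ) ^ i := by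
  obtain ⟨g, hg⟩ : X ∣ 1 - expNeg := X_dvd_iff.mpr
    (by rw [map_sub, map_one, ← coeff_zero_eq_constantCoeff_apply, expNeg, coeff_rescale]; simp)
  have hfg : f * g = 1 := mul_left_cancel₀ X_ne_zero (by rw [mul_left_comm, ← hg, hf, mul_one])
  set c : Polynomial ℚ := 1 + Polynomial.X
  have hc : c ≠ 0 := by simpa [c, add_comm] using Polynomial.X_add_C_ne_zero (1 : ℚ)
  set v := rescale c (map (algebraMap ℚ (Polynomial ℚ)) g)
  set w := rescale c (map (algebraMap ℚ (Polynomial ℚ)) f)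
  have hvw : v * w = 1 := by rw [← map_mul, ← map_mul, mul_comm, hfg, map_one, map_one]
  have hQ : Qy f = (1 - C Polynomial.X * (X * v)) * w := by
    rw [Qy]
    linear_combination (C Polynomial.X * X) * hvw
  rw [hQ, mul_pow]
  exact coeff_one_sub_C_mul_X_mul_pow_mul_pow hvw
    (derivative_X_mul_rescale_of_one_sub_expNeg_eq hg hc) n
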